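/- Let Ω ⊂ ℝ^{n+1} be δ-Reifenberg flat (in the parabolic sense). Then for every (X,t) ∈ Ω, every point (P,η) ∈ ∂Ω realizing the parabolic distance from (X,t) to ∂Ω satisfies η = t; that is, every closest boundary point to (X,t) lies in the same time slice. -/

import Mathlib

open MeasureTheory Real Set Filter Topology
open scoped ENNReal NNReal BigOperators

noncomputable section

abbrev Pt (n : ℕ) := EuclideanSpace ℝ (Fin n) × ℝ

/-- Real inner product on `ℝ^n`. -/
def ip {n : ℕ} (x y : EuclideanSpace ℝ (Fin n)) : ℝ := inner ℝ x y

/-- Parabolic distance between points of `ℝ^n × ℝ`. -/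
def pdist {n : ℕ} (p q : Pt n) : ℝ := dist p.1 q.1 + Real.sqrt |p.2 - q.2|

/-- The parabolic cylinder of radius `R` centered at `c`. -/
def pcyl {n : ℕ} (c : Pt n) (R : ℝ) : Set (Pt n) :=
  {p | dist p.1 c.1 < R ∧ |p.2 - c.2| < R ^ 2}

/-- `Ω` is `δ`-Reifenberg flat in the parabolic sense: at every boundary point and every
scale there is an `n`-plane containing the time direction (encoded by its spatial unit
normal `ν`) such that the part of the cylinder lying at distance more than `δR` on the
`ν`-side of the plane is in `Ω`, and the part lying at distance more than `δR` on the
other side is in the complement of the closure of `Ω`. -/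
def ReifenbergFlat {n : ℕ} (Ω : Set (Pt n)) (δ : ℝ) : Prop :=
  ∀ Q ∈ frontier Ω, ∀ R : ℝ, 0 < R →
    ∃ ν : EuclideanSpace ℝ (Fin n), ‖ν‖ = 1 ∧
      (∀ p ∈ pcyl Q R, δ * R < ip (p.1 - Q.1) ν → p ∈ Ω) ∧
      (∀ p ∈ pcyl Q R, ip (p.1 - Q.1) ν < -(δ * R) → p ∉ closure Ω)

/-!
Suppose a closest boundary point `q` to `p` had `q.2 ≠ p.2`, and put `s = √|p.2 - q.2|`, so
`pdist p q = |p.1 - q.1| + s`. At scale `R = 2s` the cylinder around `q` contains the time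
slice `t = p.2`, and on that slice the spatial segment through `q` in the direction of the
normal `ν` runs from `Ωᶜ` to `Ω` within distance `r = (δ + 1/2) s` of `q`, hence crosses
`∂Ω` at a point `x` with `x.2 = p.2`. Then `pdist p x ≤ |p.1 - q.1| + r`, and `r < s` because
`δ < 1/2`, contradicting the minimality of `q`.
-/

theorem IsPreconnected.inter_frontier_nonempty {X : Type*} [TopologicalSpace X] {s t : Set X}
    (hs : IsPreconnected s) (hst : (s ∩ t).Nonempty) (hsdt : (s \ t).Nonempty) :
    (s ∩ frontier t).Nonempty := by
  by_contra hempty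
  have not_frontier : ∀ x ∈ s, x ∉ frontier t := fun x hx hxf => hempty ⟨x, hx, hxf⟩
  have cover : s ⊆ interior t ∪ interior tᶜ := by
    intro x hx
    rw [interior_compl]
    by_cases hxc : x ∈ closure t
    · exact Or.inl (by_contra fun hxi => not_frontier x hx ⟨hxc, hxi⟩)
    · exact Or.inr hxc
  obtain ⟨a, has, hat⟩ := hst
  obtain ⟨b, hbs, hbt⟩ := hsdt
  have ha : a ∈ interior t :=
    (cover has).resolve_right fun hai => interior_subset hai hat
  have hb : b ∈ interior tᶜ :=
    (cover hbs).resolve_left fun hbi => hbt (interior_subset hbi)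
  obtain ⟨x, -, hxt, hxtc⟩ :=
    hs _ _ isOpen_interior isOpen_interior cover ⟨a, has, ha⟩ ⟨b, hbs, hb⟩
  exact interior_subset hxtc (interior_subset hxt)

theorem pdist_of_snd_eq {n : ℕ} {p x : Pt n} (h : x.2 = p.2) : pdist p x = dist p.1 x.1 := by
  simp [pdist, h]

theorem ReifenbergFlat.exists_frontier_mem_slice {n : ℕ} {Ω : Set (Pt n)} {δ : ℝ}
    (hRF : ReifenbergFlat Ω δ) (hδ : 0 ≤ δ) {q : Pt n} (hq : q ∈ frontier Ω) {R r τ : ℝ}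
    (hR : 0 < R) (hτ : |τ - q.2| < R ^ 2) (hδr : δ * R < r) (hrR : r < R) :
    ∃ x ∈ frontier Ω, x.2 = τ ∧ dist x.1 q.1 ≤ r := by
  obtain ⟨ν, hν, mem_of_pos, not_mem_closure_of_neg⟩ := hRF q hq R hR
  let g : ℝ → Pt n := fun s => (q.1 + s • ν, τ)
  have hg : Continuous g := by fun_prop
  have dist_g : ∀ s, dist (g s).1 q.1 = |s| := fun s => by
    rw [dist_eq_norm, add_sub_cancel_left, norm_smul, hν, Real.norm_eq_abs, mul_one]
  have ip_g : ∀ s, ip ((g s).1 - q.1) ν = s := fun s => by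
    rw [ip, add_sub_cancel_left, real_inner_smul_left, real_inner_self_eq_norm_sq, hν]
    ring
  have g_mem_pcyl : ∀ s, |s| ≤ r → g s ∈ pcyl q R := fun s hs =>
    ⟨by rw [dist_g]; linarith, hτ⟩
  have hr : 0 ≤ r := (mul_nonneg hδ hR.le).trans hδr.le
  have hin : g r ∈ Ω :=
    mem_of_pos _ (g_mem_pcyl r (abs_of_nonneg hr).le) (by rw [ip_g]; exact hδr)
  have hout : g (-r) ∉ Ω := fun h =>
    not_mem_closure_of_neg _ (g_mem_pcyl (-r) (by rw [abs_neg, abs_of_nonneg hr]))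
      (by rw [ip_g]; linarith) (subset_closure h)
  obtain ⟨_, ⟨s, hs, rfl⟩, hx⟩ :=
    (isPreconnected_Icc.image g hg.continuousOn).inter_frontier_nonempty
      ⟨g r, mem_image_of_mem g (right_mem_Icc.2 (by linarith)), hin⟩
      ⟨g (-r), mem_image_of_mem g (left_mem_Icc.2 (by linarith)), hout⟩
  exact ⟨g s, hx, rfl, by rw [dist_g]; exact abs_le.2 hs⟩

/-- in a `δ`-Reifenberg flat parabolic domain (`δ` small), every closest
boundary point to an interior point lies in the same time slice. -/
theorem statement1 (n : ℕ) (Ω : Set (Pt n)) (δ : ℝ) (hδ0 : 0 < δ) (hδ : δ < 1 / 2)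
    (hRF : ReifenbergFlat Ω δ) :
    ∀ p ∈ Ω, ∀ q ∈ frontier Ω,
      (∀ q' ∈ frontier Ω, pdist p q ≤ pdist p q') → q.2 = p.2 := by
  intro p _ q hq hmin
  by_contra hne
  set s := √|p.2 - q.2|
  have hs : 0 < s := Real.sqrt_pos.2 (abs_pos.2 (sub_ne_zero.2 (Ne.symm hne)))
  have hs_sq : s ^ 2 = |p.2 - q.2| := Real.sq_sqrt (abs_nonneg _)
  obtain ⟨x, hx, hxt, hxq⟩ := hRF.exists_frontier_mem_slice hδ0.le hq (R := 2 * s)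
    (r := (δ + 1 / 2) * s) (τ := p.2) (by positivity) (by nlinarith) (by nlinarith) (by nlinarith)
  have hpq : pdist p q = dist p.1 q.1 + s := rfl
  have hpx : pdist p x ≤ dist p.1 q.1 + (δ + 1 / 2) * s := by
    rw [pdist_of_snd_eq hxt]
    linarith [dist_triangle_right p.1 x.1 q.1]
  nlinarith [hmin x hx]
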